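/- arXiv:2605.21323 — 4 statements merged into one kernel-verified Lean document; each statement's English description precedes it below -/
import Mathlib

section
/- Let R be a commutative ring and x ∈ R an element with bounded x-torsion, i.e. there exists N such that ⋃_{k≥0} Ann(x^k) = Ann(x^N). Then the commutative square formed by R, the localization R[x⁻¹], the x-adic completion R^∧_x, and R^∧_x[x⁻¹] (with the canonical maps) is a pullback square; that is, R is isomorphic to the fiber product of R[x⁻¹] and R^∧_x over R^∧_x[x⁻¹]. -/
/-!
Bounded torsion says that `Ann(x^N) ∩ x^N R = 0`, and it passes to the completion: an element
of `R^∧_x` killed by a power of `x` is the image of an element of `Ann(x^N)`. Indeed, the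
level-`i` terms of a representing Cauchy sequence can be corrected modulo `x^i` into elements of
`Ann(x^N)`, and for `i ≥ N` these corrections are congruent modulo `x^N`, hence all equal.

Given compatible `a = r₀ / x^n` and `b`, compatibility says `x^m r₀ = x^(m+n) b` in `R^∧_x`.
Reading this modulo `x^(m+n)` gives `x^m r₀ = x^(m+n) c` in `R`, so `b - c` is killed by
`x^(m+n)`, whence `b - c = e` with `e ∈ Ann(x^N)`, and `c + e` is the required element.
It is unique since an element vanishing in `R[x⁻¹]` lies in `Ann(x^N)`, and one vanishing in
`R^∧_x` lies in `x^N R`.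
-/

lemma Localization.exists_pow_mul_eq_of_awayLift_eq {R A : Type*} [CommRing R] [CommRing A]
    [Algebra R A] {x : R}
    (hunit : IsUnit (((algebraMap A (Localization.Away (algebraMap R A x))).comp
      (algebraMap R A)) x))
    {a : Localization.Away x} {b : A} {n : ℕ} {r₀ : R}
    (ha : a * algebraMap R _ x ^ n = algebraMap R _ r₀)
    (hab : Localization.awayLift _ x hunit a = algebraMap A _ b) :
    ∃ m, algebraMap R A (x ^ m * r₀) = algebraMap R A x ^ (m + n) * b := by
  have h := congrArg (Localization.awayLift _ x hunit) ha
  rw [map_mul, map_pow, hab, IsLocalization.Away.lift_eq, IsLocalization.Away.lift_eq,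
    RingHom.comp_apply, RingHom.comp_apply, ← map_pow, ← map_mul] at h
  obtain ⟨m, hm⟩ := IsLocalization.Away.exists_of_eq (algebraMap R A x) h
  exact ⟨m, by rw [map_mul, map_pow]; linear_combination -hm⟩

lemma Ideal.mem_span_singleton_pow {R : Type*} [CommRing R] {x r : R} {n : ℕ} :
    r ∈ Ideal.span {x} ^ n ↔ x ^ n ∣ r := by
  rw [Ideal.span_singleton_pow, Ideal.mem_span_singleton]

lemma eq_zero_of_mul_pow_eq_zero_of_pow_dvd {R : Type*} [CommRing R] {x : R} {N : ℕ}
    (hbdd : ∀ (k : ℕ) (r : R), r * x ^ k = 0 → r * x ^ N = 0) {r : R} (hr : r * x ^ N = 0)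
    (hdvd : x ^ N ∣ r) : r = 0 := by
  obtain ⟨w, rfl⟩ := hdvd
  have hw : w * x ^ N = 0 := hbdd (N + N) w (by linear_combination hr)
  linear_combination hw

namespace AdicCompletion

variable {R : Type*} [CommRing R]

lemma evalₐ_algebraMap (I : Ideal R) (n : ℕ) (r : R) :
    evalₐ I n (algebraMap R (AdicCompletion I R) r) = Ideal.Quotient.mk (I ^ n) r := by
  rw [AlgHom.commutes, Ideal.Quotient.algebraMap_eq]

variable {x : R}

local notation "R̂" => AdicCompletion (Ideal.span (singleton x)) R

lemma AdicCauchySequence.pow_dvd_sub (f : AdicCauchySequence (Ideal.span {x}) R) {m n : ℕ}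
    (h : m ≤ n) : x ^ m ∣ f.val n - f.val m := by
  rw [← Ideal.mem_span_singleton_pow, ← Ideal.Quotient.mk_eq_mk_iff_sub_mem]
  exact Ideal.mk_eq_mk _ h f

lemma algebraMap_eq_mk_iff (r : R) (f : AdicCauchySequence (Ideal.span {x}) R) :
    algebraMap R R̂ r = mk _ R f ↔ ∀ n, x ^ n ∣ r - f.val n := by
  have level (n : ℕ) :
      evalₐ _ n (algebraMap R R̂ r) = evalₐ _ n (mk _ R f) ↔ x ^ n ∣ r - f.val n := by
    rw [evalₐ_algebraMap, evalₐ_mk, Ideal.Quotient.mk_eq_mk_iff_sub_mem,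
      Ideal.mem_span_singleton_pow]
  exact ⟨fun h n ↦ (level n).mp (congrArg _ h), fun h ↦ ext_evalₐ fun n ↦ (level n).mpr (h n)⟩

lemma algebraMap_mul_mk_eq_zero_iff (r : R) (f : AdicCauchySequence (Ideal.span {x}) R) :
    algebraMap R R̂ r * mk _ R f = 0 ↔ ∀ n, x ^ n ∣ r * f.val n := by
  have level (n : ℕ) :
      evalₐ _ n (algebraMap R R̂ r * mk _ R f) = evalₐ _ n 0 ↔ x ^ n ∣ r * f.val n := by
    rw [map_mul, evalₐ_algebraMap, evalₐ_mk, _root_.map_zero, ← map_mul,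
      Ideal.Quotient.eq_zero_iff_mem, Ideal.mem_span_singleton_pow]
  exact ⟨fun h n ↦ (level n).mp (congrArg _ h), fun h ↦ ext_evalₐ fun n ↦ (level n).mpr (h n)⟩

lemma pow_dvd_of_algebraMap_eq_pow_mul {s : R} {k : ℕ} {b : R̂}
    (h : algebraMap R R̂ s = algebraMap R R̂ x ^ k * b) : x ^ k ∣ s := by
  have hk := congrArg (evalₐ _ k) h
  rwa [map_mul, map_pow, evalₐ_algebraMap, evalₐ_algebraMap, ← map_pow,
    Ideal.Quotient.eq_zero_iff_mem.mpr (Ideal.mem_span_singleton_pow.mpr dvd_rfl), zero_mul,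
    Ideal.Quotient.eq_zero_iff_mem, Ideal.mem_span_singleton_pow] at hk

section BoundedTorsion

variable {N : ℕ} (hbdd : ∀ (k : ℕ) (r : R), r * x ^ k = 0 → r * x ^ N = 0)
include hbdd

lemma exists_mul_pow_eq_zero_and_pow_dvd_sub {k : ℕ} {f : AdicCauchySequence (Ideal.span {x}) R}
    (hf : algebraMap R R̂ (x ^ k) * mk _ R f = 0) (i : ℕ) :
    ∃ e, e * x ^ N = 0 ∧ x ^ i ∣ f.val i - e := by
  obtain ⟨u, hu⟩ := (algebraMap_mul_mk_eq_zero_iff _ f).mp hf (i + k)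
  refine ⟨f.val (i + k) - x ^ i * u, hbdd k _ (by linear_combination hu), ?_⟩
  obtain ⟨v, hv⟩ := f.pow_dvd_sub (Nat.le_add_right i k)
  exact ⟨u - v, by linear_combination -hv⟩

lemma exists_algebraMap_eq_of_pow_mul_eq_zero {k : ℕ} {d : R̂}
    (hd : algebraMap R R̂ x ^ k * d = 0) : ∃ e, e * x ^ N = 0 ∧ algebraMap R R̂ e = d := by
  obtain ⟨f, rfl⟩ := mk_surjective _ R d
  rw [← map_pow] at hd
  obtain ⟨e, he, hef⟩ := exists_mul_pow_eq_zero_and_pow_dvd_sub hbdd hd N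
  refine ⟨e, he, (algebraMap_eq_mk_iff e f).mpr fun j ↦ ?_⟩
  obtain ⟨e', he', he'f⟩ := exists_mul_pow_eq_zero_and_pow_dvd_sub hbdd hd (j + N)
  have he'e : e' = e := by
    refine sub_eq_zero.mp (eq_zero_of_mul_pow_eq_zero_of_pow_dvd hbdd
      (by linear_combination he' - he) ?_)
    convert dvd_add (dvd_sub hef ((pow_dvd_pow x (Nat.le_add_left N j)).trans he'f))
      (f.pow_dvd_sub (Nat.le_add_left N j)) using 1
    ring
  subst he'e
  convert dvd_sub (f.pow_dvd_sub (Nat.le_add_right j N))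
    ((pow_dvd_pow x (Nat.le_add_right j N)).trans he'f) using 1
  ring

lemma exists_algebraMap_eq_and_mul_pow_eq {s : R} {k : ℕ} {b : R̂}
    (h : algebraMap R R̂ s = algebraMap R R̂ x ^ k * b) :
    ∃ r, algebraMap R R̂ r = b ∧ r * x ^ (k + N) = s * x ^ N := by
  obtain ⟨c, rfl⟩ := pow_dvd_of_algebraMap_eq_pow_mul h
  obtain ⟨e, he, hec⟩ := exists_algebraMap_eq_of_pow_mul_eq_zero hbdd (k := k)
    (d := b - algebraMap R R̂ c) (by rw [mul_sub, ← h, map_mul, map_pow, sub_self])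
  exact ⟨c + e, by rw [map_add, hec, add_sub_cancel], by linear_combination x ^ k * he⟩

lemma eq_zero_of_algebraMap_eq_zero {r : R} (hloc : algebraMap R (Localization.Away x) r = 0)
    (hcompl : algebraMap R R̂ r = 0) : r = 0 := by
  obtain ⟨j, hj⟩ := IsLocalization.Away.exists_of_eq (S := Localization.Away x) x
    (hloc.trans (_root_.map_zero _).symm)
  refine eq_zero_of_mul_pow_eq_zero_of_pow_dvd hbdd (hbdd j r (by linear_combination hj)) ?_
  exact pow_dvd_of_algebraMap_eq_pow_mul (b := 0) (by rw [hcompl, mul_zero])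

end BoundedTorsion

end AdicCompletion

open AdicCompletion

/-- Strickland: Let `R` be a commutative ring and `x ∈ R` with bounded
`x`-torsion (there is `N` with `⋃_k Ann(x^k) = Ann(x^N)`).  Then the square formed by
`R`, the localization `R[x⁻¹]`, the `x`-adic completion `R^∧_x`, and `R^∧_x[x⁻¹]` is a
pullback: every compatible pair of elements of `R[x⁻¹]` and `R^∧_x` comes from a unique
element of `R`. -/
theorem stmt_0 (R : Type*) [CommRing R] (x : R)
    (N : ℕ)
    (hbdd : ∀ (k : ℕ) (r : R), r * x ^ k = 0 → r * x ^ N = 0)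
    (hunit : IsUnit
      (((algebraMap (AdicCompletion (Ideal.span {x}) R)
          (Localization.Away
            (algebraMap R (AdicCompletion (Ideal.span {x}) R) x))).comp
        (algebraMap R (AdicCompletion (Ideal.span {x}) R))) x)) :
    ∀ (a : Localization.Away x) (b : AdicCompletion (Ideal.span {x}) R),
      Localization.awayLift
          ((algebraMap (AdicCompletion (Ideal.span {x}) R)
            (Localization.Away
              (algebraMap R (AdicCompletion (Ideal.span {x}) R) x))).comp
          (algebraMap R (AdicCompletion (Ideal.span {x}) R))) x hunit a =
        algebraMap (AdicCompletion (Ideal.span {x}) R)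
          (Localization.Away
            (algebraMap R (AdicCompletion (Ideal.span {x}) R) x)) b →
      ∃! r : R,
        algebraMap R (Localization.Away x) r = a ∧
        algebraMap R (AdicCompletion (Ideal.span {x}) R) r = b := by
  intro a b hab
  obtain ⟨n, r₀, ha⟩ := IsLocalization.Away.surj x a
  obtain ⟨m, hm⟩ := Localization.exists_pow_mul_eq_of_awayLift_eq hunit ha hab
  obtain ⟨r, hrb, hr⟩ := exists_algebraMap_eq_and_mul_pow_eq hbdd hm
  have hra : algebraMap R (Localization.Away x) r = a := by
    refine ((IsLocalization.Away.algebraMap_pow_isUnit (S := Localization.Away x) x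
      (m + n + N)).mul_left_inj).mp ?_
    have hr' := congrArg (algebraMap R (Localization.Away x)) hr
    simp only [map_mul, map_pow] at hr' ⊢
    linear_combination hr' - algebraMap R (Localization.Away x) x ^ (m + N) * ha
  refine ⟨r, ⟨hra, hrb⟩, fun r' ⟨hr'a, hr'b⟩ ↦ sub_eq_zero.mp ?_⟩
  exact eq_zero_of_algebraMap_eq_zero hbdd (by rw [map_sub, hr'a, hra, sub_self])
    (by rw [map_sub, hr'b, hrb, sub_self])
end

section
/- Let A be a commutative ring, F a formal group law over A with p-series [p](u) = Σ_{j≥1} c_j u^j, and let 1 ≤ i ≤ p−1 with least positive inverse i⁻¹ mod p. Then in the ring (A[[u]]/([p](u)))[u⁻¹], the element [i](u) is invertible, with inverse u⁻¹ · f_i(u), where f_i(u) = Σ_{j≥0} a^{(i⁻¹)}_{0,j+1} ([i](u))^j and Σ_{j≥1} a^{(i⁻¹)}_{0,j} v^j = [i⁻¹](v) is the i⁻¹-series of F. -/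
open PowerSeries Finset

/-- Substitution of two power series with zero constant term into a two-variable series
with coefficients `a k j`:  `F(f,g) = Σ_{k,j} a k j * f^k * g^j`. -/
noncomputable def Fsub (A : Type) [CommRing A] (a : ℕ → ℕ → A)
    (f g : PowerSeries A) : PowerSeries A :=
  PowerSeries.mk fun n => ∑ k ∈ Finset.range (n + 1), ∑ j ∈ Finset.range (n + 1),
    a k j * PowerSeries.coeff n (f ^ k * g ^ j)

/-- The `n`-series `[n](u)` of the formal group law with coefficients `a`. -/
noncomputable def nser (A : Type) [CommRing A] (a : ℕ → ℕ → A) : ℕ → PowerSeries A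
  | 0 => 0
  | n + 1 => Fsub A a (nser A a n) PowerSeries.X

/-- `a : ℕ → ℕ → A` is the coefficient family of a commutative one-dimensional formal
group law `F(x,y) = Σ a k j x^k y^j`: `F(x,0) = x`, `F(0,y) = y`, `F` commutative and
associative (associativity expressed on all substituted triples of power series with zero
constant term). -/
def IsFGL (A : Type) [CommRing A] (a : ℕ → ℕ → A) : Prop :=
  (∀ k, a k 0 = if k = 1 then 1 else 0) ∧
  (∀ j, a 0 j = if j = 1 then 1 else 0) ∧
  (∀ k j, a k j = a j k) ∧
  (∀ f g h : PowerSeries A,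
    PowerSeries.constantCoeff f = 0 → PowerSeries.constantCoeff g = 0 →
    PowerSeries.constantCoeff h = 0 →
    Fsub A a (Fsub A a f g) h = Fsub A a f (Fsub A a g h))

/-- Composition `f(g(u))` of one-variable power series (`g` with zero constant term). -/
noncomputable def pscomp (A : Type) [CommRing A] (f g : PowerSeries A) : PowerSeries A :=
  PowerSeries.mk fun n => ∑ k ∈ Finset.range (n + 1),
    PowerSeries.coeff k f * PowerSeries.coeff n (g ^ k)

/-- The series `f_i(u) = Σ_{j≥0} a^{(m)}_{0,j+1} ([i](u))^j`, where `m = i⁻¹` and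
`[m](v) = Σ_{j≥1} a^{(m)}_{0,j} v^j`. -/
noncomputable def fser (A : Type) [CommRing A] (a : ℕ → ℕ → A) (i m : ℕ) :
    PowerSeries A :=
  PowerSeries.mk fun n => ∑ j ∈ Finset.range (n + 1),
    PowerSeries.coeff (j + 1) (nser A a m) * PowerSeries.coeff n (nser A a i ^ j)

/-!
Write `[m](v) = v · g(v)`. Since `[i](u)` has no constant term, `f_i(u) = g([i](u))`, so
`[i](u) · f_i(u) = [m]([i](u)) = [mi](u) = [kp + 1](u) = F(u, [kp](u)) ≡ u` modulo `[kp](u)`,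
and `[p](u)` divides `[kp](u)`. Thus `[i](u) · f_i(u) = u` in `A[[u]]/([p](u))`, and `u` is a unit
after localizing. Identities between substituted series such as `F(f, g)` are verified modulo
every `X ^ N`, where `F` may be replaced by a finite truncation.
-/

section PowerSeriesLemmas

variable {R : Type*} [CommRing R]

theorem PowerSeries.eq_of_forall_X_pow_dvd_sub {f g : PowerSeries R}
    (h : ∀ N, (X : PowerSeries R) ^ N ∣ f - g) : f = g := by
  ext n
  have := X_pow_dvd_iff.mp (h (n + 1)) n n.lt_succ_self
  rwa [map_sub, sub_eq_zero] at this

theorem PowerSeries.coeff_pow_mul_pow_of_lt {f g : PowerSeries R} (hf : constantCoeff f = 0)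
    (hg : constantCoeff g = 0) {n k j : ℕ} (h : n < k + j) :
    coeff n (f ^ k * g ^ j) = 0 := by
  have hdvd : (X : PowerSeries R) ^ (k + j) ∣ f ^ k * g ^ j := by
    rw [pow_add]
    exact mul_dvd_mul (pow_dvd_pow_of_dvd (X_dvd_iff.mpr hf) k)
      (pow_dvd_pow_of_dvd (X_dvd_iff.mpr hg) j)
  exact X_pow_dvd_iff.mp hdvd n h

theorem PowerSeries.coeff_subst_of_constantCoeff_zero {f g : PowerSeries R}
    (hg : constantCoeff g = 0) (n : ℕ) :
    coeff n (f.subst g) = ∑ k ∈ Finset.range (n + 1), coeff k f * coeff n (g ^ k) := by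
  rw [coeff_subst' (HasSubst.of_constantCoeff_zero' hg)]
  refine finsum_eq_sum_of_support_subset _ fun k hk => ?_
  rw [Finset.coe_range, Set.mem_Iio]
  by_contra! hkn
  have hcoeff : coeff n (g ^ k) = 0 := by
    simpa using coeff_pow_mul_pow_of_lt hg hg (j := 0) (Nat.lt_of_succ_le hkn)
  exact hk (by simp only [hcoeff, smul_zero])

theorem PowerSeries.X_pow_dvd_subst_sub_subst {f f' g : PowerSeries R}
    (hg : constantCoeff g = 0) {N : ℕ} (h : (X : PowerSeries R) ^ N ∣ f - f') :
    (X : PowerSeries R) ^ N ∣ f.subst g - f'.subst g := by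
  have hs := HasSubst.of_constantCoeff_zero' hg
  obtain ⟨q, hq⟩ := h
  rw [← subst_sub hs, hq, subst_mul hs, subst_pow hs, subst_X hs]
  exact dvd_mul_of_dvd_left (pow_dvd_pow_of_dvd (X_dvd_iff.mpr hg) N) _

end PowerSeriesLemmas

theorem Finset.sum_range_sum_range_eq_of_eq_zero {M : Type*} [AddCommMonoid M]
    (c : ℕ → ℕ → M) {n K J : ℕ} (hK : n < K) (hJ : n < J)
    (hc : ∀ k j, n < k + j → c k j = 0) :
    ∑ k ∈ range K, ∑ j ∈ range J, c k j = ∑ k ∈ range (n + 1), ∑ j ∈ range (n + 1), c k j := by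
  rw [← sum_product', ← sum_product']
  refine (sum_subset (product_subset_product (range_subset_range.2 hK)
    (range_subset_range.2 hJ)) fun x hx hnx => hc _ _ ?_).symm
  simp only [mem_product, mem_range, not_and, not_lt] at hx hnx
  omega

section FormalGroupLaw

variable {A : Type} [CommRing A]

noncomputable def truncFsub (b : ℕ → ℕ → A) (K J : ℕ) (f g : PowerSeries A) : PowerSeries A :=
  ∑ k ∈ range K, ∑ j ∈ range J, C (b k j) * f ^ k * g ^ j

theorem X_pow_dvd_Fsub_sub_truncFsub (b : ℕ → ℕ → A) {f g : PowerSeries A}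
    (hf : constantCoeff f = 0) (hg : constantCoeff g = 0) {N K J : ℕ} (hK : N ≤ K)
    (hJ : N ≤ J) : (X : PowerSeries A) ^ N ∣ Fsub A b f g - truncFsub b K J f g := by
  refine X_pow_dvd_iff.mpr fun n hn => ?_
  simp only [Fsub, truncFsub, map_sub, coeff_mk, map_sum, mul_assoc, coeff_C_mul]
  rw [sum_range_sum_range_eq_of_eq_zero _ (hn.trans_le hK) (hn.trans_le hJ)
    fun k j h => by rw [coeff_pow_mul_pow_of_lt hf hg h, mul_zero], sub_self]

theorem Fsub_comm {a : ℕ → ℕ → A} (ha : ∀ k j, a k j = a j k) (f g : PowerSeries A) :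
    Fsub A a f g = Fsub A a g f := by
  ext n
  simp only [Fsub, coeff_mk]
  rw [sum_comm]
  exact sum_congr rfl fun j _ => sum_congr rfl fun k _ => by rw [ha, mul_comm (f ^ k)]

theorem subst_Fsub (a : ℕ → ℕ → A) {f g h : PowerSeries A} (hf : constantCoeff f = 0)
    (hg : constantCoeff g = 0) (hh : constantCoeff h = 0) :
    (Fsub A a f g).subst h = Fsub A a (f.subst h) (g.subst h) := by
  have hs := HasSubst.of_constantCoeff_zero' hh
  refine eq_of_forall_X_pow_dvd_sub fun N => ?_
  have htrunc : (truncFsub a N N f g).subst h = truncFsub a N N (f.subst h) (g.subst h) := by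
    simp only [truncFsub, ← coe_substAlgHom hs, map_sum, map_mul, map_pow, ← algebraMap_eq,
      AlgHom.commutes]
  have hf' := constantCoeff_subst_eq_zero hh f hf
  have hg' := constantCoeff_subst_eq_zero hh g hg
  have hdvd := dvd_add
    (X_pow_dvd_subst_sub_subst hh (X_pow_dvd_Fsub_sub_truncFsub a hf hg (le_refl N) le_rfl))
    (dvd_sub_comm.mp (X_pow_dvd_Fsub_sub_truncFsub a hf' hg' (le_refl N) le_rfl))
  rwa [htrunc, sub_add_sub_cancel] at hdvd

theorem Fsub_eq_add_mul {a : ℕ → ℕ → A} (ha : ∀ k, a k 0 = if k = 1 then 1 else 0)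
    {f g : PowerSeries A} (hf : constantCoeff f = 0) (hg : constantCoeff g = 0) :
    Fsub A a f g = f + g * Fsub A (fun k j => a k (j + 1)) f g := by
  refine eq_of_forall_X_pow_dvd_sub fun N => ?_
  have hrow : ∀ k, ∑ j ∈ range (N + 1), C (a k j) * f ^ k * g ^ j
      = g * ∑ j ∈ range N, C (a k (j + 1)) * f ^ k * g ^ j + C (a k 0) * f ^ k := by
    intro k
    rw [sum_range_succ', mul_sum, pow_zero, mul_one]
    exact congrArg (· + _) (sum_congr rfl fun j _ => by ring)
  have hsplit : truncFsub a (N + 2) (N + 1) f g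
      = f + g * truncFsub (fun k j => a k (j + 1)) (N + 2) N f g := by
    simp [truncFsub, hrow, sum_add_distrib, ← mul_sum, ha, add_comm]
  have hdvd := dvd_add (X_pow_dvd_Fsub_sub_truncFsub a hf hg (K := N + 2) (J := N + 1)
      (by omega) (by omega))
    (dvd_mul_of_dvd_right (dvd_sub_comm.mp (X_pow_dvd_Fsub_sub_truncFsub
      (fun k j => a k (j + 1)) hf hg (K := N + 2) (J := N) (by omega) le_rfl)) g)
  rw [hsplit] at hdvd
  convert hdvd using 1
  ring

namespace IsFGL

variable {a : ℕ → ℕ → A}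

theorem dvd_Fsub_sub (hF : IsFGL A a) {f g : PowerSeries A} (hf : constantCoeff f = 0)
    (hg : constantCoeff g = 0) : g ∣ Fsub A a f g - f :=
  ⟨_, by rw [Fsub_eq_add_mul hF.1 hf hg, add_sub_cancel_left]⟩

theorem Fsub_zero (hF : IsFGL A a) {f : PowerSeries A} (hf : constantCoeff f = 0) :
    Fsub A a f 0 = f :=
  sub_eq_zero.mp (zero_dvd_iff.mp (hF.dvd_Fsub_sub hf (map_zero _)))

theorem constantCoeff_nser (hF : IsFGL A a) : ∀ n, constantCoeff (nser A a n) = 0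
  | 0 => map_zero _
  | n + 1 => by
    have ih := hF.constantCoeff_nser n
    rw [nser, ← X_dvd_iff]
    simpa using dvd_add (hF.dvd_Fsub_sub ih constantCoeff_X) (X_dvd_iff.mpr ih)

theorem nser_add (hF : IsFGL A a) (s : ℕ) :
    ∀ t, nser A a (s + t) = Fsub A a (nser A a s) (nser A a t)
  | 0 => (hF.Fsub_zero (hF.constantCoeff_nser s)).symm
  | t + 1 => by
    rw [← add_assoc, nser, hF.nser_add s t, nser, hF.2.2.2 _ _ _ (hF.constantCoeff_nser s)
      (hF.constantCoeff_nser t) constantCoeff_X]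

theorem nser_dvd_nser_mul (hF : IsFGL A a) (p : ℕ) : ∀ k, nser A a p ∣ nser A a (k * p)
  | 0 => by simp [nser]
  | k + 1 => by
    rw [Nat.succ_mul, hF.nser_add]
    simpa using dvd_add (hF.dvd_Fsub_sub (hF.constantCoeff_nser (k * p))
      (hF.constantCoeff_nser p)) (hF.nser_dvd_nser_mul p k)

theorem subst_nser (hF : IsFGL A a) (i m : ℕ) :
    (nser A a m).subst (nser A a i) = nser A a (m * i) := by
  have hs := HasSubst.of_constantCoeff_zero' (hF.constantCoeff_nser i)
  induction m with
  | zero => rw [zero_mul, nser, ← coe_substAlgHom hs, map_zero]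
  | succ m ih =>
    rw [nser, subst_Fsub a (hF.constantCoeff_nser m) constantCoeff_X (hF.constantCoeff_nser i),
      ih, subst_X hs, Nat.succ_mul, hF.nser_add]

theorem fser_eq_subst (hF : IsFGL A a) (i m : ℕ) :
    fser A a i m = (PowerSeries.mk fun j => coeff (j + 1) (nser A a m)).subst (nser A a i) := by
  ext n
  rw [coeff_subst_of_constantCoeff_zero (hF.constantCoeff_nser i), fser, coeff_mk]
  simp only [coeff_mk]

theorem nser_mul_fser (hF : IsFGL A a) (i m : ℕ) :
    nser A a i * fser A a i m = nser A a (m * i) := by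
  have hs := HasSubst.of_constantCoeff_zero' (hF.constantCoeff_nser i)
  have hm : nser A a m = X * PowerSeries.mk fun j => coeff (j + 1) (nser A a m) := by
    simpa [hF.constantCoeff_nser m] using eq_X_mul_shift_add_const (nser A a m)
  calc nser A a i * fser A a i m
      = (X * PowerSeries.mk fun j => coeff (j + 1) (nser A a m)).subst (nser A a i) := by
        rw [subst_mul hs, subst_X hs, hF.fser_eq_subst]
    _ = nser A a (m * i) := by rw [← hm, hF.subst_nser]

theorem nser_dvd_nser_mul_fser_sub_X (hF : IsFGL A a) {p i m k : ℕ}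
    (him : i * m = 1 + k * p) : nser A a p ∣ nser A a i * fser A a i m - X := by
  rw [hF.nser_mul_fser, mul_comm, him, add_comm, nser, Fsub_comm hF.2.2.1]
  exact (hF.nser_dvd_nser_mul p k).trans
    (hF.dvd_Fsub_sub constantCoeff_X (hF.constantCoeff_nser _))

end IsFGL

end FormalGroupLaw

theorem IsLocalization.Away.algebraMap_mul_invSelf_mul_of_mul_eq {R S : Type*} [CommRing R]
    [CommRing S] [Algebra R S] {u : R} [IsLocalization.Away u S] {x y : R} (h : x * y = u) :
    algebraMap R S x * (IsLocalization.Away.invSelf u * algebraMap R S y) = 1 := by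
  rw [mul_left_comm, ← map_mul, h, mul_comm, IsLocalization.Away.mul_invSelf]

theorem stmt_5_general (A : Type) [CommRing A] (a : ℕ → ℕ → A) (hFGL : IsFGL A a)
    (p : ℕ) (i m k : ℕ)
    (him : i * m = 1 + k * p) :
    IsUnit (algebraMap (PowerSeries A ⧸ Ideal.span {nser A a p})
        (Localization.Away
          (Ideal.Quotient.mk (Ideal.span {nser A a p}) (PowerSeries.X)))
        (Ideal.Quotient.mk (Ideal.span {nser A a p}) (nser A a i))) ∧
    ∃ v : Localization.Away
        (Ideal.Quotient.mk (Ideal.span {nser A a p}) (PowerSeries.X)),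
      algebraMap (PowerSeries A ⧸ Ideal.span {nser A a p}) _
          (Ideal.Quotient.mk (Ideal.span {nser A a p}) (PowerSeries.X)) * v = 1 ∧
      algebraMap (PowerSeries A ⧸ Ideal.span {nser A a p}) _
          (Ideal.Quotient.mk (Ideal.span {nser A a p}) (nser A a i)) *
        (v * algebraMap (PowerSeries A ⧸ Ideal.span {nser A a p}) _
          (Ideal.Quotient.mk (Ideal.span {nser A a p}) (fser A a i m))) = 1 := by
  have hu : Ideal.Quotient.mk (Ideal.span {nser A a p}) (nser A a i) *
      Ideal.Quotient.mk (Ideal.span {nser A a p}) (fser A a i m) =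
      Ideal.Quotient.mk (Ideal.span {nser A a p}) X := by
    rw [← map_mul, Ideal.Quotient.eq, Ideal.mem_span_singleton]
    exact hFGL.nser_dvd_nser_mul_fser_sub_X him
  have hinv := IsLocalization.Away.algebraMap_mul_invSelf_mul_of_mul_eq
    (S := Localization.Away (Ideal.Quotient.mk (Ideal.span {nser A a p}) X)) hu
  exact ⟨.of_mul_eq_one _ hinv, _, IsLocalization.Away.mul_invSelf _, hinv⟩

/-- in `(A[[u]]/([p](u)))[u⁻¹]` the element `[i](u)` is invertible, with
inverse `u⁻¹ · f_i(u)` where `f_i(u) = Σ_j a^{(i⁻¹)}_{0,j+1}([i](u))^j`. -/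
theorem stmt_5 (A : Type) [CommRing A] (a : ℕ → ℕ → A) (hFGL : IsFGL A a)
    (p : ℕ) (hp : p.Prime) (i m k : ℕ)
    (hi1 : 1 ≤ i) (hi2 : i ≤ p - 1) (hm1 : 1 ≤ m) (hm2 : m ≤ p - 1)
    (him : i * m = 1 + k * p) :
    IsUnit (algebraMap (PowerSeries A ⧸ Ideal.span {nser A a p})
        (Localization.Away
          (Ideal.Quotient.mk (Ideal.span {nser A a p}) (PowerSeries.X)))
        (Ideal.Quotient.mk (Ideal.span {nser A a p}) (nser A a i))) ∧
    ∃ v : Localization.Away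
        (Ideal.Quotient.mk (Ideal.span {nser A a p}) (PowerSeries.X)),
      algebraMap (PowerSeries A ⧸ Ideal.span {nser A a p}) _
          (Ideal.Quotient.mk (Ideal.span {nser A a p}) (PowerSeries.X)) * v = 1 ∧
      algebraMap (PowerSeries A ⧸ Ideal.span {nser A a p}) _
          (Ideal.Quotient.mk (Ideal.span {nser A a p}) (nser A a i)) *
        (v * algebraMap (PowerSeries A ⧸ Ideal.span {nser A a p}) _
          (Ideal.Quotient.mk (Ideal.span {nser A a p}) (fser A a i m))) = 1 :=
  stmt_5_general A a hFGL p i m k him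
end

section
/- Let R be the MU_*-algebra with generators u, d_{l,j}^{(i)}, η_i, q_j (for l,j ≥ 0, i ∈ (ℤ/p)^×) subject to the relations: d_{l,j}^{(i)} − t_{l,j}^{(i)} = u·d_{l,j+1}^{(i)}; d_{0,j}^{(1)} = 0 for all j ≥ 0; q_j − c_j = u·q_{j+1}; q₀ = 0; η₁ = 1; η_i(u·d_{0,0}^{(i)} + i⁻¹) = 1 + k_i·q₁; η_i·q₁ = i·q₁. Then in R, ⋃_{k≥0} Ann(u^k) = Ann(u) = (q₁), i.e. u has bounded u-torsion with annihilator the ideal generated by q₁. -/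
open MvPolynomial

/-- Generators of the presented `MU_*`-algebra model `R` of `MU^{C_p}_*`:
`u`, `d_{l,j}^{(i)}` (written `d i l j`), `η_i`, `q_j`. -/
inductive Gen : Type
  | u : Gen
  | d : ℕ → ℕ → ℕ → Gen
  | eta : ℕ → Gen
  | q : ℕ → Gen

/-- The defining relations of `R` (Theorem 3.1): for `1 ≤ i ≤ p-1` and `l, j ≥ 0`,
`d_{l,j}^{(i)} − t_{l,j}^{(i)} = u·d_{l,j+1}^{(i)}`;  `d_{0,j}^{(1)} = 0`;
`q_j − c_j = u·q_{j+1}`;  `q₀ = 0`;  `η₁ = 1`;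
`η_i(u·d_{0,0}^{(i)} + i⁻¹) = 1 + k_i·q₁`;  `η_i·q₁ = i·q₁`. -/
def rels (MU : Type) [CommRing MU] (p : ℕ) (t : ℕ → ℕ → ℕ → MU) (c : ℕ → MU)
    (inv kk : ℕ → ℕ) : Set (MvPolynomial Gen MU) :=
  {r | (∃ i l j, 1 ≤ i ∧ i ≤ p - 1 ∧
          r = X (Gen.d i l j) - C (t i l j) - X Gen.u * X (Gen.d i l (j + 1))) ∨
       (∃ j, r = X (Gen.d 1 0 j)) ∨
       (∃ j, r = X (Gen.q j) - C (c j) - X Gen.u * X (Gen.q (j + 1))) ∨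
       r = X (Gen.q 0) ∨
       r = X (Gen.eta 1) - 1 ∨
       (∃ i, 1 ≤ i ∧ i ≤ p - 1 ∧
          r = X (Gen.eta i) * (X Gen.u * X (Gen.d i 0 0) + C ((inv i : MU)))
              - 1 - C ((kk i : MU)) * X (Gen.q 1)) ∨
       (∃ i, 1 ≤ i ∧ i ≤ p - 1 ∧
          r = X (Gen.eta i) * X (Gen.q 1) - C ((i : MU)) * X (Gen.q 1))}

/-- The presented `MU_*`-algebra `R ≅ MU^{C_p}_*`. -/
abbrev Rring (MU : Type) [CommRing MU] (p : ℕ) (t : ℕ → ℕ → ℕ → MU) (c : ℕ → MU)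
    (inv kk : ℕ → ℕ) : Type :=
  MvPolynomial Gen MU ⧸ Ideal.span (rels MU p t c inv kk)

variable {MU : Type} [CommRing MU]

/-- The image of a generator in `R`. -/
noncomputable def gen (MU : Type) [CommRing MU] (p : ℕ) (t : ℕ → ℕ → ℕ → MU)
    (c : ℕ → MU) (inv kk : ℕ → ℕ) (g : Gen) : Rring MU p t c inv kk :=
  Ideal.Quotient.mk (Ideal.span (rels MU p t c inv kk)) (X g)

/-!
Since `q₀ = c₀ + u q₁` with `q₀ = c₀ = 0`, the ideal `(q₁)` kills `u`; what has to be shown is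
that `u` is a nonzerodivisor in `R/(q₁) = P/(rels, q₁)`, `P` the polynomial ring on the
generators. A relation `u^k f ∈ (rels, q₁)` involves only finitely many generators, so for `m`
large it survives the substitution that solves the chain relations up to level `m`
(`q_j ↦ c_j + u c_{j+1} + ⋯ + u^{m-j} q_m`, likewise for `d`, and `η₁ ↦ 1`, `d_{0,j}^{(1)} ↦ 0`).
That substitution is the identity modulo the relations and sends them into the ideal `J_m`
generated by the image `T` of `q₁` and the elements `η_i x_i - 1` (`2 ≤ i ≤ p - 1`), where `x_i`
is the image of `u d_{0,0}^{(i)} + i⁻¹`. Modulo `J_m`, `η_i` is an inverse of `x_i`, so `P/J_m` is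
the localization of `P/(T)` at `∏ x_i`, and `u` is a nonzerodivisor there because
`T ≡ c₁ = p` modulo `u` and `p` is a nonzerodivisor of `MU_*`.
-/

namespace MvPolynomial

variable {σ R : Type*} [CommRing R]

theorem aeval_sub_mem_of_forall_sub_mem {I : Ideal (MvPolynomial σ R)}
    {g : σ → MvPolynomial σ R} (hg : ∀ s, g s - X s ∈ I) (f : MvPolynomial σ R) :
    aeval g f - f ∈ I := by
  have hmk : (Ideal.Quotient.mkₐ R I).comp (aeval g) = Ideal.Quotient.mkₐ R I :=
    algHom_ext fun s => by simpa using Ideal.Quotient.eq.mpr (hg s)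
  exact Ideal.Quotient.eq.mp (DFunLike.congr_fun hmk f)

theorem X_dvd_of_aeval_update_eq_zero [DecidableEq σ] {s : σ} {f : MvPolynomial σ R}
    (hf : aeval (Function.update (X : σ → MvPolynomial σ R) s 0) f = 0) : X s ∣ f := by
  have hg (s' : σ) :
      Function.update (X : σ → MvPolynomial σ R) s 0 s' - X s' ∈ Ideal.span {X s} := by
    rcases eq_or_ne s' s with rfl | hs'
    · simp
    · simp [hs']
  have := aeval_sub_mem_of_forall_sub_mem hg f
  rwa [hf, zero_sub, neg_mem_iff, Ideal.mem_span_singleton] at this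

theorem C_mul_eq_zero {a : R} (ha : a ∈ nonZeroDivisors R) {f : MvPolynomial σ R}
    (h : C a * f = 0) : f = 0 := by
  ext n
  simpa [mul_left_mem_nonZeroDivisors_eq_zero_iff ha] using congr_arg (coeff n) h

-- Setting `X s = 0` in `X s * f = (C a + X s * g) * h` shows `X s ∣ h`.
theorem mk_X_mem_nonZeroDivisors {s : σ} {a : R} (ha : a ∈ nonZeroDivisors R)
    (g : MvPolynomial σ R) :
    Ideal.Quotient.mk (Ideal.span {C a + X s * g}) (X s) ∈ nonZeroDivisors _ := by
  classical
  refine mem_nonZeroDivisors_iff_left.mpr fun y hy => ?_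
  obtain ⟨f, rfl⟩ := Ideal.Quotient.mk_surjective y
  rw [← map_mul, Ideal.Quotient.eq_zero_iff_mem, Ideal.mem_span_singleton] at hy
  obtain ⟨h, hh⟩ := hy
  have h0 : aeval (Function.update (X : σ → MvPolynomial σ R) s 0) h = 0 := by
    refine C_mul_eq_zero ha ?_
    simpa using (congr_arg (aeval (Function.update (X : σ → MvPolynomial σ R) s 0)) hh).symm
  obtain ⟨h', rfl⟩ := X_dvd_of_aeval_update_eq_zero h0
  rw [mul_left_comm, X_mul_cancel_left_iff] at hh
  rw [hh, map_mul, Ideal.Quotient.eq_zero_iff_mem.mpr (Ideal.mem_span_singleton_self _), zero_mul]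

end MvPolynomial

namespace MUCp

open MvPolynomial Filter

section Chains

-- `chain a g k j = a j + u a (j+1) + ⋯ + u^(k-1) a (j+k-1) + u^k g (j+k)`, the value of `g j`
-- forced by the relations `g j = a j + u g (j+1)`.
noncomputable def chain (a : ℕ → MU) (g : ℕ → Gen) : ℕ → ℕ → MvPolynomial Gen MU
  | 0, j => X (g j)
  | k + 1, j => C (a j) + X Gen.u * chain a g k (j + 1)

variable {a : ℕ → MU} {g : ℕ → Gen}

theorem chain_sub_X_mem {I : Ideal (MvPolynomial Gen MU)}
    (h : ∀ j, X (g j) - C (a j) - X Gen.u * X (g (j + 1)) ∈ I) (k j : ℕ) :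
    chain a g k j - X (g j) ∈ I := by
  induction k generalizing j with
  | zero => simp [chain]
  | succ k ih =>
    have hsplit : chain a g (k + 1) j - X (g j)
        = X Gen.u * (chain a g k (j + 1) - X (g (j + 1)))
          - (X (g j) - C (a j) - X Gen.u * X (g (j + 1))) := by
      rw [chain]; ring
    rw [hsplit]
    exact sub_mem (I.mul_mem_left _ (ih _)) (h j)

theorem chain_sub_of_lt {j m : ℕ} (h : j < m) :
    chain a g (m - j) j = C (a j) + X Gen.u * chain a g (m - (j + 1)) (j + 1) := by
  rw [show m - j = m - (j + 1) + 1 by omega, chain]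

theorem map_chain {S : Type*} [Semiring S] {φ ψ : MvPolynomial Gen MU →+* S}
    (hC : ∀ b, φ (C b) = ψ (C b)) (hu : φ (X Gen.u) = ψ (X Gen.u))
    (hg : ∀ j, φ (X (g j)) = ψ (X (g j))) (k j : ℕ) :
    φ (chain a g k j) = ψ (chain a g k j) := by
  induction k generalizing j with
  | zero => exact hg j
  | succ k ih => simp only [chain, map_add, map_mul, hC, hu, ih]

end Chains

section Relations

variable {p : ℕ} {t : ℕ → ℕ → ℕ → MU} {c : ℕ → MU} {inv kk : ℕ → ℕ}

theorem dRel_mem_rels {i : ℕ} (hi : 1 ≤ i) (hip : i ≤ p - 1) (l j : ℕ) :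
    X (Gen.d i l j) - C (t i l j) - X Gen.u * X (Gen.d i l (j + 1)) ∈ rels MU p t c inv kk :=
  Or.inl ⟨i, l, j, hi, hip, rfl⟩

theorem d_one_zero_mem_rels (j : ℕ) : X (Gen.d 1 0 j) ∈ rels MU p t c inv kk :=
  Or.inr (Or.inl ⟨j, rfl⟩)

theorem qRel_mem_rels (j : ℕ) :
    X (Gen.q j) - C (c j) - X Gen.u * X (Gen.q (j + 1)) ∈ rels MU p t c inv kk :=
  Or.inr (Or.inr (Or.inl ⟨j, rfl⟩))

theorem q_zero_mem_rels : X (Gen.q 0) ∈ rels MU p t c inv kk :=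
  Or.inr (Or.inr (Or.inr (Or.inl rfl)))

theorem eta_one_sub_one_mem_rels : X (Gen.eta 1) - 1 ∈ rels MU p t c inv kk :=
  Or.inr (Or.inr (Or.inr (Or.inr (Or.inl rfl))))

theorem etaRel_mem_rels {i : ℕ} (hi : 1 ≤ i) (hip : i ≤ p - 1) :
    X (Gen.eta i) * (X Gen.u * X (Gen.d i 0 0) + C ((inv i : MU))) - 1
      - C ((kk i : MU)) * X (Gen.q 1) ∈ rels MU p t c inv kk :=
  Or.inr (Or.inr (Or.inr (Or.inr (Or.inr (Or.inl ⟨i, hi, hip, rfl⟩)))))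

end Relations

section LevelSubst

variable (p : ℕ) (t : ℕ → ℕ → ℕ → MU) (c : ℕ → MU) (inv : ℕ → ℕ) (m : ℕ)

-- Solves the chain relations below level `m`; the relations `η₁ = 1` and `d_{0,j}^{(1)} = 0`
-- are solved too.
noncomputable def levelSubst : Gen → MvPolynomial Gen MU
  | Gen.u => X Gen.u
  | Gen.eta i => if i = 1 then 1 else X (Gen.eta i)
  | Gen.q j => if j ≤ m then chain c Gen.q (m - j) j else X (Gen.q j)
  | Gen.d i l j =>
    if i = 1 ∧ l = 0 then 0
    else if 1 ≤ i ∧ i ≤ p - 1 ∧ j ≤ m then chain (t i l) (Gen.d i l) (m - j) j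
    else X (Gen.d i l j)

-- The images of `q₁` and of `u d_{0,0}^{(i)} + i⁻¹` under `levelSubst p t c m`.
noncomputable def levelQ₁ : MvPolynomial Gen MU := chain c Gen.q (m - 1) 1

noncomputable def levelEtaInv (i : ℕ) : MvPolynomial Gen MU :=
  X Gen.u * chain (t i 0) (Gen.d i 0) m 0 + C (inv i : MU)

noncomputable def levelIdeal : Ideal (MvPolynomial Gen MU) :=
  Ideal.span (insert (levelQ₁ c m)
    ((fun i => X (Gen.eta i) * levelEtaInv t inv m i - 1) '' Set.Icc 2 (p - 1)))

variable {p t c inv m}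

@[simp] theorem levelSubst_u : levelSubst p t c m Gen.u = X Gen.u := rfl

@[simp] theorem levelSubst_eta_one : levelSubst p t c m (Gen.eta 1) = 1 := rfl

theorem levelSubst_eta {i : ℕ} (hi : i ≠ 1) : levelSubst p t c m (Gen.eta i) = X (Gen.eta i) :=
  if_neg hi

theorem levelSubst_q {j : ℕ} (hj : j ≤ m) :
    levelSubst p t c m (Gen.q j) = chain c Gen.q (m - j) j :=
  if_pos hj

@[simp] theorem levelSubst_d_one_zero (j : ℕ) : levelSubst p t c m (Gen.d 1 0 j) = 0 := by
  simp [levelSubst]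

theorem levelSubst_d {i l j : ℕ} (h₁₀ : ¬(i = 1 ∧ l = 0)) (hi : 1 ≤ i)
    (hip : i ≤ p - 1) (hj : j ≤ m) :
    levelSubst p t c m (Gen.d i l j) = chain (t i l) (Gen.d i l) (m - j) j := by
  simp only [levelSubst, if_neg h₁₀, if_pos (And.intro hi (And.intro hip hj))]

theorem levelSubst_sub_X_mem {kk : ℕ → ℕ} (g : Gen) :
    levelSubst p t c m g - X g ∈ Ideal.span (rels MU p t c inv kk) := by
  have hrel {r} (hr : r ∈ rels MU p t c inv kk) :=
    Ideal.subset_span (α := MvPolynomial Gen MU) hr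
  cases g with
  | u => simp
  | eta i =>
    by_cases hi : i = 1
    · subst hi
      simpa using neg_mem (hrel eta_one_sub_one_mem_rels)
    · simp [levelSubst_eta hi]
  | q j =>
    by_cases hj : j ≤ m
    · rw [levelSubst_q hj]
      exact chain_sub_X_mem (fun j => hrel (qRel_mem_rels j)) _ _
    · simp [levelSubst, hj]
  | d i l j =>
    by_cases h₁₀ : i = 1 ∧ l = 0
    · obtain ⟨rfl, rfl⟩ := h₁₀
      simpa using neg_mem (hrel (d_one_zero_mem_rels j))
    by_cases hij : 1 ≤ i ∧ i ≤ p - 1 ∧ j ≤ m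
    · rw [levelSubst_d h₁₀ hij.1 hij.2.1 hij.2.2]
      exact chain_sub_X_mem (fun j => hrel (dRel_mem_rels hij.1 hij.2.1 l j)) _ _
    · simp [levelSubst, h₁₀, hij]

theorem aeval_levelSubst_sub_mem {kk : ℕ → ℕ} (f : MvPolynomial Gen MU) :
    aeval (levelSubst p t c m) f - f ∈ Ideal.span (rels MU p t c inv kk) :=
  aeval_sub_mem_of_forall_sub_mem levelSubst_sub_X_mem f

end LevelSubst

section Eventually

variable {p : ℕ} {t : ℕ → ℕ → ℕ → MU} {c : ℕ → MU} {inv kk : ℕ → ℕ} {m : ℕ}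

theorem levelQ₁_mem_levelIdeal : levelQ₁ c m ∈ levelIdeal p t c inv m :=
  Ideal.subset_span (Set.mem_insert _ _)

theorem etaRel_mem_levelIdeal {i : ℕ} (hi : 2 ≤ i) (hip : i ≤ p - 1) :
    X (Gen.eta i) * levelEtaInv t inv m i - 1 ∈ levelIdeal p t c inv m :=
  Ideal.subset_span (Set.mem_insert_of_mem _ ⟨i, ⟨hi, hip⟩, rfl⟩)

theorem aeval_levelSubst_X_q_one (hm : 1 ≤ m) :
    aeval (levelSubst p t c m) (X (Gen.q 1) : MvPolynomial Gen MU) = levelQ₁ c m := by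
  rw [aeval_X, levelSubst_q hm, levelQ₁]

theorem aeval_levelSubst_qRel {j : ℕ} (hj : j < m) :
    aeval (levelSubst p t c m) (X (Gen.q j) - C (c j) - X Gen.u * X (Gen.q (j + 1))) = 0 := by
  simp only [map_sub, map_mul, aeval_X, aeval_C, algebraMap_eq, levelSubst_u,
    levelSubst_q hj.le, levelSubst_q (Nat.succ_le_of_lt hj), chain_sub_of_lt hj]
  ring

theorem aeval_levelSubst_dRel (ht1 : ∀ j, t 1 0 j = 0) {i l j : ℕ} (hi : 1 ≤ i)
    (hip : i ≤ p - 1) (hj : j < m) :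
    aeval (levelSubst p t c m)
      (X (Gen.d i l j) - C (t i l j) - X Gen.u * X (Gen.d i l (j + 1))) = 0 := by
  by_cases h₁₀ : i = 1 ∧ l = 0
  · obtain ⟨rfl, rfl⟩ := h₁₀
    simp [ht1]
  · simp only [map_sub, map_mul, aeval_X, aeval_C, algebraMap_eq, levelSubst_u,
      levelSubst_d h₁₀ hi hip hj.le, levelSubst_d h₁₀ hi hip (Nat.succ_le_of_lt hj),
      chain_sub_of_lt hj]
    ring

theorem aeval_levelSubst_etaRel {i : ℕ} (hi : 2 ≤ i) (hip : i ≤ p - 1) (hm : 1 ≤ m) :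
    aeval (levelSubst p t c m) (X (Gen.eta i) * (X Gen.u * X (Gen.d i 0 0) + C ((inv i : MU)))
      - 1 - C ((kk i : MU)) * X (Gen.q 1))
      = (X (Gen.eta i) * levelEtaInv t inv m i - 1) - C (kk i : MU) * levelQ₁ c m := by
  have hd : levelSubst p t c m (Gen.d i 0 0) = chain (t i 0) (Gen.d i 0) m 0 :=
    levelSubst_d (by omega) (by omega) hip (Nat.zero_le m)
  simp only [map_sub, map_mul, map_add, aeval_X, aeval_C, algebraMap_eq, map_one, levelSubst_u,
    levelSubst_eta (show i ≠ 1 by omega), hd, aeval_levelSubst_X_q_one hm, levelEtaInv]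

theorem inv_one_eq_one_and_kk_one_eq_zero (hp : 1 ≤ p - 1)
    (hinv : ∀ i, 1 ≤ i → i ≤ p - 1 →
      1 ≤ inv i ∧ inv i ≤ p - 1 ∧ i * inv i = 1 + kk i * p) :
    inv 1 = 1 ∧ kk 1 = 0 := by
  obtain ⟨-, hle, heq⟩ := hinv 1 le_rfl hp
  have hkk : kk 1 = 0 := by
    by_contra hk
    have := Nat.le_mul_of_pos_left p (Nat.pos_of_ne_zero hk)
    omega
  refine ⟨?_, hkk⟩
  rw [hkk] at heq
  omega

theorem eventually_aeval_levelSubst_mem_of_mem_rels (hc0 : c 0 = 0) (ht1 : ∀ j, t 1 0 j = 0)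
    (hinv : ∀ i, 1 ≤ i → i ≤ p - 1 →
      1 ≤ inv i ∧ inv i ≤ p - 1 ∧ i * inv i = 1 + kk i * p)
    {r : MvPolynomial Gen MU} (hr : r ∈ rels MU p t c inv kk) :
    ∀ᶠ m in atTop, aeval (levelSubst p t c m) r ∈ levelIdeal p t c inv m := by
  rcases hr with ⟨i, l, j, hi, hip, rfl⟩ | ⟨j, rfl⟩ | ⟨j, rfl⟩ | rfl | rfl |
    ⟨i, hi, hip, rfl⟩ | ⟨i, hi, hip, rfl⟩
  · filter_upwards [eventually_gt_atTop j] with m hm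
    rw [aeval_levelSubst_dRel ht1 hi hip hm]
    exact zero_mem _
  · simp
  · filter_upwards [eventually_gt_atTop j] with m hm
    rw [aeval_levelSubst_qRel hm]
    exact zero_mem _
  · filter_upwards [eventually_gt_atTop 0] with m hm
    rw [aeval_X, levelSubst_q hm.le, chain_sub_of_lt hm, hc0, map_zero, zero_add]
    exact Ideal.mul_mem_left _ _ levelQ₁_mem_levelIdeal
  · simp
  · filter_upwards [eventually_ge_atTop 1] with m hm
    rcases eq_or_ne i 1 with rfl | hi1
    · obtain ⟨hinv1, hkk1⟩ := inv_one_eq_one_and_kk_one_eq_zero hip hinv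
      simp [hinv1, hkk1]
    · rw [aeval_levelSubst_etaRel (by omega) hip hm]
      exact sub_mem (etaRel_mem_levelIdeal (by omega) hip)
        (Ideal.mul_mem_left _ _ levelQ₁_mem_levelIdeal)
  · filter_upwards [eventually_ge_atTop 1] with m hm
    rw [map_sub, map_mul, map_mul, aeval_levelSubst_X_q_one hm, ← sub_mul]
    exact Ideal.mul_mem_left _ _ levelQ₁_mem_levelIdeal

theorem eventually_aeval_levelSubst_mem (hc0 : c 0 = 0) (ht1 : ∀ j, t 1 0 j = 0)
    (hinv : ∀ i, 1 ≤ i → i ≤ p - 1 →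
      1 ≤ inv i ∧ inv i ≤ p - 1 ∧ i * inv i = 1 + kk i * p)
    {f : MvPolynomial Gen MU}
    (hf : f ∈ Ideal.span (rels MU p t c inv kk) ⊔ Ideal.span {X (Gen.q 1)}) :
    ∀ᶠ m in atTop, aeval (levelSubst p t c m) f ∈ levelIdeal p t c inv m := by
  rw [← Ideal.span_union] at hf
  induction hf using Submodule.span_induction with
  | mem r hr =>
    rcases hr with hr | rfl
    · exact eventually_aeval_levelSubst_mem_of_mem_rels hc0 ht1 hinv hr
    · filter_upwards [eventually_ge_atTop 1] with m hm
      rw [aeval_levelSubst_X_q_one hm]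
      exact levelQ₁_mem_levelIdeal
  | zero => simp
  | add f g _ _ hf hg =>
    filter_upwards [hf, hg] with m hf hg
    rw [map_add]
    exact add_mem hf hg
  | smul a f _ hf =>
    filter_upwards [hf] with m hf
    rw [smul_eq_mul, map_mul]
    exact Ideal.mul_mem_left _ _ hf

theorem levelIdeal_le (hm : 1 ≤ m) :
    levelIdeal p t c inv m ≤ Ideal.span (rels MU p t c inv kk) ⊔ Ideal.span {X (Gen.q 1)} := by
  set I := Ideal.span (rels MU p t c inv kk) ⊔ Ideal.span {X (Gen.q 1)}
  have hσ (f : MvPolynomial Gen MU) (hf : f ∈ I) : aeval (levelSubst p t c m) f ∈ I := by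
    simpa using add_mem (Ideal.mem_sup_left (aeval_levelSubst_sub_mem (m := m) f)) hf
  have hq₁ : levelQ₁ c m ∈ I := by
    rw [← aeval_levelSubst_X_q_one (p := p) (t := t) hm]
    exact hσ _ (Ideal.mem_sup_right (Ideal.mem_span_singleton_self _))
  refine Ideal.span_le.mpr (Set.insert_subset hq₁ ?_)
  rintro _ ⟨i, ⟨hi, hip⟩, rfl⟩
  have hrel := hσ _ (Ideal.mem_sup_left (Ideal.subset_span (etaRel_mem_rels (by omega) hip)))
  rw [aeval_levelSubst_etaRel hi hip hm] at hrel
  simpa using add_mem hrel (I.mul_mem_left (C (kk i : MU)) hq₁)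

end Eventually

section Localization

variable (p : ℕ) (t : ℕ → ℕ → ℕ → MU) (c : ℕ → MU) (inv : ℕ → ℕ) (m : ℕ)

noncomputable def etaInvProd : MvPolynomial Gen MU :=
  ∏ i ∈ Finset.Icc 2 (p - 1), levelEtaInv t inv m i

abbrev LevelQuot : Type := MvPolynomial Gen MU ⧸ Ideal.span {levelQ₁ c m}

abbrev LevelLoc : Type :=
  Localization.Away (Ideal.Quotient.mk (Ideal.span {levelQ₁ c m}) (etaInvProd p t inv m))

noncomputable def toLevelLoc : MvPolynomial Gen MU →+* LevelLoc p t c inv m :=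
  (algebraMap (LevelQuot c m) _).comp (Ideal.Quotient.mk _)

noncomputable def invertEtaVal : Gen → LevelLoc p t c inv m
  | Gen.eta i =>
    if 2 ≤ i ∧ i ≤ p - 1 then Ring.inverse (toLevelLoc p t c inv m (levelEtaInv t inv m i))
    else toLevelLoc p t c inv m (X (Gen.eta i))
  | g => toLevelLoc p t c inv m (X g)

noncomputable def invertEta : MvPolynomial Gen MU →+* LevelLoc p t c inv m :=
  eval₂Hom ((toLevelLoc p t c inv m).comp C) (invertEtaVal p t c inv m)

variable {p t c inv m}

theorem toLevelLoc_levelQ₁ : toLevelLoc p t c inv m (levelQ₁ c m) = 0 := by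
  simp [toLevelLoc, Ideal.Quotient.eq_zero_iff_mem.mpr (Ideal.mem_span_singleton_self _)]

theorem isUnit_toLevelLoc_etaInvProd : IsUnit (toLevelLoc p t c inv m (etaInvProd p t inv m)) :=
  IsLocalization.Away.algebraMap_isUnit
    (Ideal.Quotient.mk (Ideal.span {levelQ₁ c m}) (etaInvProd p t inv m))

theorem isUnit_toLevelLoc_levelEtaInv {i : ℕ} (hi : i ∈ Finset.Icc 2 (p - 1)) :
    IsUnit (toLevelLoc p t c inv m (levelEtaInv t inv m i)) :=
  isUnit_of_dvd_unit (map_dvd _ (Finset.dvd_prod_of_mem _ hi))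
    isUnit_toLevelLoc_etaInvProd

theorem invertEta_X {g : Gen} (hg : ∀ i, g ≠ Gen.eta i) :
    invertEta p t c inv m (X g) = toLevelLoc p t c inv m (X g) := by
  rw [invertEta, eval₂Hom_X']
  cases g with
  | eta i => exact absurd rfl (hg i)
  | _ => rfl

theorem invertEta_C (b : MU) : invertEta p t c inv m (C b) = toLevelLoc p t c inv m (C b) :=
  eval₂Hom_C _ _ _

theorem invertEta_chain (a : ℕ → MU) {g : ℕ → Gen} (hg : ∀ j i, g j ≠ Gen.eta i)
    (k j : ℕ) :
    invertEta p t c inv m (chain a g k j) = toLevelLoc p t c inv m (chain a g k j) :=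
  map_chain invertEta_C (invertEta_X (by simp)) (fun j => invertEta_X (hg j)) k j

theorem invertEta_levelQ₁ : invertEta p t c inv m (levelQ₁ c m) = 0 :=
  (invertEta_chain c (by simp) (m - 1) 1).trans toLevelLoc_levelQ₁

theorem invertEta_levelEtaInv (i : ℕ) :
    invertEta p t c inv m (levelEtaInv t inv m i)
      = toLevelLoc p t c inv m (levelEtaInv t inv m i) := by
  simp only [levelEtaInv, map_add, map_mul, invertEta_X (g := Gen.u) (by simp),
    invertEta_chain _ (g := Gen.d i 0) (by simp), invertEta_C]

theorem levelIdeal_le_ker_invertEta :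
    levelIdeal p t c inv m ≤ RingHom.ker (invertEta p t c inv m) := by
  refine Ideal.span_le.mpr (Set.insert_subset invertEta_levelQ₁ ?_)
  rintro _ ⟨i, hi, rfl⟩
  have hi' : 2 ≤ i ∧ i ≤ p - 1 := hi
  have hunit := isUnit_toLevelLoc_levelEtaInv (t := t) (c := c) (inv := inv) (m := m)
    (Finset.mem_Icc.mpr hi')
  rw [SetLike.mem_coe, RingHom.mem_ker, map_sub, map_mul, map_one, invertEta_levelEtaInv,
    invertEta, eval₂Hom_X', invertEtaVal, if_pos hi', Ring.inverse_mul_cancel _ hunit, sub_self]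

theorem levelQ₁_span_le_levelIdeal :
    Ideal.span {levelQ₁ c m} ≤ levelIdeal p t c inv m :=
  Ideal.span_le.mpr (Set.singleton_subset_iff.mpr levelQ₁_mem_levelIdeal)

theorem mk_levelEtaInv_mul_mk_X_eta {i : ℕ} (hi : 2 ≤ i) (hip : i ≤ p - 1) :
    Ideal.Quotient.mk (levelIdeal p t c inv m) (levelEtaInv t inv m i)
      * Ideal.Quotient.mk (levelIdeal p t c inv m) (X (Gen.eta i)) = 1 := by
  rw [← map_mul, ← map_one (Ideal.Quotient.mk _), Ideal.Quotient.eq, mul_comm]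
  exact etaRel_mem_levelIdeal hi hip

theorem isUnit_mk_etaInvProd :
    IsUnit (Ideal.Quotient.mk (levelIdeal p t c inv m) (etaInvProd p t inv m)) := by
  rw [etaInvProd, map_prod, IsUnit.prod_iff]
  intro i hi
  obtain ⟨hi, hip⟩ := Finset.mem_Icc.mp hi
  exact IsUnit.of_mul_eq_one _ (mk_levelEtaInv_mul_mk_X_eta hi hip)

variable (p t c inv m) in
noncomputable def fromLevelLoc :
    LevelLoc p t c inv m →+* MvPolynomial Gen MU ⧸ levelIdeal p t c inv m :=
  IsLocalization.Away.lift (Ideal.Quotient.mk (Ideal.span {levelQ₁ c m}) (etaInvProd p t inv m))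
    (g := Ideal.Quotient.factor levelQ₁_span_le_levelIdeal) isUnit_mk_etaInvProd

theorem fromLevelLoc_toLevelLoc (f : MvPolynomial Gen MU) :
    fromLevelLoc p t c inv m (toLevelLoc p t c inv m f) = Ideal.Quotient.mk _ f :=
  IsLocalization.Away.lift_eq (S := LevelLoc p t c inv m) _ _ (Ideal.Quotient.mk _ f)

theorem fromLevelLoc_comp_invertEta :
    (fromLevelLoc p t c inv m).comp (invertEta p t c inv m)
      = Ideal.Quotient.mk (levelIdeal p t c inv m) := by
  refine ringHom_ext (fun b => by simp [invertEta_C, fromLevelLoc_toLevelLoc]) fun g => ?_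
  rw [RingHom.comp_apply]
  by_cases hg : ∃ i, 2 ≤ i ∧ i ≤ p - 1 ∧ g = Gen.eta i
  · obtain ⟨i, hi, hip, rfl⟩ := hg
    have hunit := isUnit_toLevelLoc_levelEtaInv (t := t) (c := c) (inv := inv) (m := m)
      (Finset.mem_Icc.mpr ⟨hi, hip⟩)
    rw [invertEta, eval₂Hom_X', invertEtaVal, if_pos ⟨hi, hip⟩]
    refine left_inv_eq_right_inv (a := Ideal.Quotient.mk _ (levelEtaInv t inv m i)) ?_
      (mk_levelEtaInv_mul_mk_X_eta hi hip)
    rw [← fromLevelLoc_toLevelLoc, ← map_mul, Ring.inverse_mul_cancel _ hunit, map_one]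
  · have hval : invertEtaVal p t c inv m g = toLevelLoc p t c inv m (X g) := by
      cases g with
      | eta i => exact if_neg fun h => hg ⟨i, h.1, h.2, rfl⟩
      | _ => rfl
    rw [invertEta, eval₂Hom_X', hval, fromLevelLoc_toLevelLoc]

theorem toLevelLoc_X_u_mem_nonZeroDivisors (hm : 2 ≤ m) (hc1 : c 1 = (p : MU))
    (hp : (p : MU) ∈ nonZeroDivisors MU) :
    toLevelLoc p t c inv m (X Gen.u) ∈ nonZeroDivisors (LevelLoc p t c inv m) := by
  obtain ⟨k, rfl⟩ : ∃ k, m = k + 2 := ⟨m - 2, by omega⟩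
  have hq : levelQ₁ c (k + 2) = C (p : MU) + X Gen.u * chain c Gen.q k 2 := by
    rw [← hc1]; rfl
  have hu := MvPolynomial.mk_X_mem_nonZeroDivisors (s := Gen.u) hp (chain c Gen.q k 2)
  rw [← hq] at hu
  exact IsLocalization.map_nonZeroDivisors_le
    (Submonoid.powers (Ideal.Quotient.mk _ (etaInvProd p t inv (k + 2))))
    (LevelLoc p t c inv (k + 2))
    (Submonoid.mem_map_of_mem (algebraMap (LevelQuot c (k + 2)) _) hu)

theorem mem_levelIdeal_of_X_u_pow_mul_mem (hm : 2 ≤ m) (hc1 : c 1 = (p : MU))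
    (hp : (p : MU) ∈ nonZeroDivisors MU) {k : ℕ} {f : MvPolynomial Gen MU}
    (h : X Gen.u ^ k * f ∈ levelIdeal p t c inv m) : f ∈ levelIdeal p t c inv m := by
  have h0 : invertEta p t c inv m (X Gen.u ^ k * f) = 0 := levelIdeal_le_ker_invertEta h
  rw [map_mul, map_pow, invertEta_X (by simp)] at h0
  have hf : invertEta p t c inv m f = 0 := (mul_left_mem_nonZeroDivisors_eq_zero_iff
    (pow_mem (toLevelLoc_X_u_mem_nonZeroDivisors hm hc1 hp) k)).mp h0
  rw [← Ideal.Quotient.eq_zero_iff_mem, ← fromLevelLoc_comp_invertEta, RingHom.comp_apply, hf,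
    map_zero]

end Localization

section Torsion

variable {p : ℕ} {t : ℕ → ℕ → ℕ → MU} {c : ℕ → MU} {inv kk : ℕ → ℕ}

theorem mem_of_X_u_pow_mul_mem (hc0 : c 0 = 0) (hc1 : c 1 = (p : MU))
    (hp : (p : MU) ∈ nonZeroDivisors MU) (ht1 : ∀ j, t 1 0 j = 0)
    (hinv : ∀ i, 1 ≤ i → i ≤ p - 1 →
      1 ≤ inv i ∧ inv i ≤ p - 1 ∧ i * inv i = 1 + kk i * p)
    {k : ℕ} {f : MvPolynomial Gen MU}
    (h : X Gen.u ^ k * f ∈ Ideal.span (rels MU p t c inv kk) ⊔ Ideal.span {X (Gen.q 1)}) :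
    f ∈ Ideal.span (rels MU p t c inv kk) ⊔ Ideal.span {X (Gen.q 1)} := by
  obtain ⟨m, hmem, hm⟩ := ((eventually_aeval_levelSubst_mem hc0 ht1 hinv h).and
    (eventually_ge_atTop 2)).exists
  rw [map_mul, map_pow, aeval_X, levelSubst_u] at hmem
  have hσf := levelIdeal_le (kk := kk) (by omega)
    (mem_levelIdeal_of_X_u_pow_mul_mem hm hc1 hp hmem)
  simpa using sub_mem hσf
    (Ideal.mem_sup_left (aeval_levelSubst_sub_mem (m := m) (inv := inv) (kk := kk) f))

end Torsion

section Presentation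

variable {p : ℕ} {t : ℕ → ℕ → ℕ → MU} {c : ℕ → MU} {inv kk : ℕ → ℕ}

theorem mk_mem_span_gen_q_one_iff (f : MvPolynomial Gen MU) :
    Ideal.Quotient.mk _ f ∈ Ideal.span {gen MU p t c inv kk (Gen.q 1)} ↔
      f ∈ Ideal.span (rels MU p t c inv kk) ⊔ Ideal.span {X (Gen.q 1)} := by
  have hspan : Ideal.span {gen MU p t c inv kk (Gen.q 1)}
      = (Ideal.span {X (Gen.q 1)}).map (Ideal.Quotient.mk _) := by
    rw [Ideal.map_span, Set.image_singleton, gen]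
  rw [hspan, ← Ideal.mem_comap, Ideal.comap_map_of_surjective _ Ideal.Quotient.mk_surjective,
    ← RingHom.ker_eq_comap_bot, Ideal.mk_ker, sup_comm]

theorem gen_q_one_mul_gen_u (hc0 : c 0 = 0) :
    gen MU p t c inv kk (Gen.q 1) * gen MU p t c inv kk Gen.u = 0 := by
  rw [gen, gen, ← map_mul, Ideal.Quotient.eq_zero_iff_mem]
  have h : X (Gen.q 0) - (X (Gen.q 0) - C (c 0) - X Gen.u * X (Gen.q 1))
      ∈ Ideal.span (rels MU p t c inv kk) :=
    sub_mem (Ideal.subset_span q_zero_mem_rels) (Ideal.subset_span (qRel_mem_rels 0))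
  simpa [hc0, mul_comm] using h

end Presentation

end MUCp

theorem stmt_7_general (MU : Type) [CommRing MU] (p : ℕ)
    (t : ℕ → ℕ → ℕ → MU) (c : ℕ → MU) (inv kk : ℕ → ℕ)
    (hc0 : c 0 = 0) (hc1 : c 1 = (p : MU))
    (hpnzd : ∀ y : MU, (p : MU) * y = 0 → y = 0)
    (ht1 : ∀ j, t 1 0 j = 0)
    (hinv : ∀ i, 1 ≤ i → i ≤ p - 1 →
      1 ≤ inv i ∧ inv i ≤ p - 1 ∧ i * inv i = 1 + kk i * p) :
    (∀ y : Rring MU p t c inv kk,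
      (∃ k : ℕ, y * gen MU p t c inv kk Gen.u ^ k = 0) ↔
        y ∈ Ideal.span {gen MU p t c inv kk (Gen.q 1)}) ∧
    (∀ y : Rring MU p t c inv kk,
      y * gen MU p t c inv kk Gen.u = 0 ↔
        y ∈ Ideal.span {gen MU p t c inv kk (Gen.q 1)}) := by
  have hp : (p : MU) ∈ nonZeroDivisors MU := mem_nonZeroDivisors_iff_left.mpr hpnzd
  have mem_of_torsion (y : Rring MU p t c inv kk) (k : ℕ)
      (hy : y * gen MU p t c inv kk Gen.u ^ k = 0) :
      y ∈ Ideal.span {gen MU p t c inv kk (Gen.q 1)} := by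
    obtain ⟨f, rfl⟩ := Ideal.Quotient.mk_surjective y
    rw [MUCp.mk_mem_span_gen_q_one_iff]
    refine MUCp.mem_of_X_u_pow_mul_mem hc0 hc1 hp ht1 hinv (k := k) (Ideal.mem_sup_left ?_)
    rwa [mul_comm, ← Ideal.Quotient.eq_zero_iff_mem, map_mul, map_pow]
  have mul_u_eq_zero (y : Rring MU p t c inv kk)
      (hy : y ∈ Ideal.span {gen MU p t c inv kk (Gen.q 1)}) :
      y * gen MU p t c inv kk Gen.u = 0 := by
    obtain ⟨z, rfl⟩ := Ideal.mem_span_singleton'.mp hy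
    rw [mul_assoc, MUCp.gen_q_one_mul_gen_u hc0, mul_zero]
  refine ⟨fun y => ⟨fun ⟨k, hk⟩ => mem_of_torsion y k hk, fun hy => ⟨1, ?_⟩⟩,
    fun y => ⟨fun hy => mem_of_torsion y 1 (by rwa [pow_one]), mul_u_eq_zero y⟩⟩
  rw [pow_one]
  exact mul_u_eq_zero y hy

/-- Lemma 3.4: in the presented ring `R`,
`⋃_k Ann(u^k) = Ann(u) = (q₁)`. -/
theorem stmt_7 (MU : Type) [CommRing MU] (p : ℕ) (hp : p.Prime)
    (t : ℕ → ℕ → ℕ → MU) (c : ℕ → MU) (inv kk : ℕ → ℕ)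
    (hc0 : c 0 = 0) (hc1 : c 1 = (p : MU))
    (hpnzd : ∀ y : MU, (p : MU) * y = 0 → y = 0)
    (ht1 : ∀ j, t 1 0 j = 0)
    (hinv : ∀ i, 1 ≤ i → i ≤ p - 1 →
      1 ≤ inv i ∧ inv i ≤ p - 1 ∧ i * inv i = 1 + kk i * p) :
    (∀ y : Rring MU p t c inv kk,
      (∃ k : ℕ, y * gen MU p t c inv kk Gen.u ^ k = 0) ↔
        y ∈ Ideal.span {gen MU p t c inv kk (Gen.q 1)}) ∧
    (∀ y : Rring MU p t c inv kk,
      y * gen MU p t c inv kk Gen.u = 0 ↔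
        y ∈ Ideal.span {gen MU p t c inv kk (Gen.q 1)}) :=
  stmt_7_general MU p t c inv kk hc0 hc1 hpnzd ht1 hinv
end

section
/- Let S be a commutative ring, g ∈ S[u] a polynomial (in a polynomial ring over S in variable u among others) whose constant term in u is p, where p is not a zero divisor in S, and suppose u is not a zero divisor in the ambient ring T (a polynomial/localized ring over S[u]). If h ∈ T satisfies u·h ∈ (g), then h ∈ (g). Consequently u is not a zero divisor in T/(g). -/
/-- Let `S` be a commutative ring and `T` a commutative ring equipped with a
"constant term in `u`" homomorphism `ε : T →+* S` such that every element of `T` with zero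
constant term is divisible by `u` (abstracting a polynomial/localized ring over `S[u]`).
Suppose `u` is not a zero divisor in `T`, `g ∈ T` has constant term `p ∈ S`, and `p` is not
a zero divisor in `S`.  If `u * h ∈ (g)` then `h ∈ (g)`; consequently `u` is not a zero
divisor in `T ⧸ (g)`. -/
theorem stmt_14 (S T : Type*) [CommRing S] [CommRing T]
    (ε : T →+* S) (u : T)
    (hu0 : ε u = 0)
    (hdiv : ∀ w : T, ε w = 0 → ∃ w', w = u * w')
    (hunzd : ∀ w : T, u * w = 0 → w = 0)
    (g : T) (p : S) (hg : ε g = p)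
    (hpnzd : ∀ s : S, p * s = 0 → s = 0) :
    (∀ h : T, u * h ∈ Ideal.span {g} → h ∈ Ideal.span {g}) ∧
    (∀ y : T ⧸ Ideal.span {g},
      y * Ideal.Quotient.mk (Ideal.span {g}) u = 0 → y = 0) := by
  have key : ∀ h : T, u * h ∈ Ideal.span {g} → h ∈ Ideal.span {g} := by
    intro h hh
    rw [Ideal.mem_span_singleton] at hh ⊢
    obtain ⟨w, hw⟩ := hh
    have hεw : ε w = 0 := by
      apply hpnzd
      have := congrArg ε hw
      simp [hu0, hg] at this
      exact this.symm
    obtain ⟨w', hw'⟩ := hdiv w hεw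
    refine ⟨w', ?_⟩
    have : u * (h - g * w') = 0 := by
      rw [hw'] at hw; ring_nf; ring_nf at hw; linear_combination hw
    have := hunzd _ this
    linear_combination this
  refine ⟨key, ?_⟩
  intro y hy
  obtain ⟨x, rfl⟩ := Ideal.Quotient.mk_surjective y
  rw [← map_mul, Ideal.Quotient.eq_zero_iff_mem] at hy
  rw [Ideal.Quotient.eq_zero_iff_mem]
  exact key x (by rwa [mul_comm])
end
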